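/- arXiv:0906.4536 — 2 statements merged into one kernel-verified Lean document; each statement's English description precedes it below -/
import Mathlib

section
/- For every integer m ≥ 0, all complex roots of T_m are real and simple (T_m has no repeated roots), so that T_m has exactly ⌈m/2⌉ distinct real roots; likewise, for every integer m ≥ 1, all complex roots of T̂_{2m} are real and simple, so that T̂_{2m} has exactly m distinct real roots. -/
/-- `Tnat` is the shifted recursion: `Tnat (m+1) = Tpoly m`. -/
noncomputable def Tnat : ℕ → Polynomial ℤ
  | 0 => 1
  | 1 => 1
  | (n + 2) => Tnat (n + 1) - Polynomial.X * Tnat n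

/-- `Tpoly m = 1` for `m ≤ 0` and `Tpoly m = Tpoly (m-1) - X * Tpoly (m-2)` for `m ≥ 1`. -/
noncomputable def Tpoly (m : ℤ) : Polynomial ℤ := Tnat (m + 1).toNat

/-- `T̂_{2m} = T_{2m-1} - t·T_{2m-3}`, for `m ≥ 1`. -/
noncomputable def Thatpoly (m : ℤ) : Polynomial ℤ :=
  Tpoly (2 * m - 1) - Polynomial.X * Tpoly (2 * m - 3)

/-!
Substituting `t = z (1 - z)` turns the recursion into
`(2z - 1) · Tnat n (t) = z^(n+1) - (1 - z)^(n+1)`, and then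
`(2z - 1) · (Tnat (n+2) - t · Tnat n)(t) = (2z - 1) (z^(n+2) + (1 - z)^(n+2))`.
With `z = e^{iφ} / (2 cos φ)`, so that `1 - z = e^{-iφ} / (2 cos φ)` and `t = (4 cos² φ)⁻¹`,
the angles `φ = kπ/(n+1)`, resp. `φ = (2j-1)π/(2(n+2))`, in `(0, π/2)` give distinct real roots,
as many as the degree bound `n/2`, resp. `n/2 + 1`, allows. Hence these are all the complex roots,
and each is simple.
-/

open Polynomial

lemma Tnat_add_two (n : ℕ) : Tnat (n + 2) = Tnat (n + 1) - X * Tnat n := rfl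

lemma natDegree_Tnat_le (n : ℕ) : (Tnat n).natDegree ≤ n / 2 := by
  induction n using Tnat.induct with
  | case1 | case2 => simp [Tnat]
  | case3 n ih₁ ih₀ =>
    rw [Tnat_add_two]
    have hX : (X * Tnat n).natDegree ≤ n / 2 + 1 :=
      natDegree_mul_le.trans (by rw [natDegree_X]; omega)
    exact (natDegree_sub_le _ _).trans (by omega)

lemma coeff_Tnat_zero (n : ℕ) : (Tnat n).coeff 0 = 1 := by
  induction n using Tnat.induct with
  | case1 | case2 => simp [Tnat]
  | case3 n ih₁ _ => simp [Tnat_add_two, ih₁]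

lemma Tnat_ne_zero (n : ℕ) : Tnat n ≠ 0 := fun h => by simpa [h] using coeff_Tnat_zero n

lemma Tnat_add_two_sub_X_mul_ne_zero (n : ℕ) : Tnat (n + 2) - X * Tnat n ≠ 0 := fun h => by
  simpa [coeff_Tnat_zero] using congrArg (coeff · 0) h

lemma natDegree_Tnat_add_two_sub_X_mul_le (n : ℕ) :
    (Tnat (n + 2) - X * Tnat n).natDegree ≤ n / 2 + 1 := by
  have hX : (X * Tnat n).natDegree ≤ 1 + n / 2 :=
    natDegree_mul_le.trans (by rw [natDegree_X]; have := natDegree_Tnat_le n; omega)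
  have := natDegree_Tnat_le (n + 2)
  exact (natDegree_sub_le _ _).trans (by omega)

lemma Tpoly_natCast (n : ℕ) : Tpoly n = Tnat (n + 1) := rfl

lemma Thatpoly_natCast_add_one (k : ℕ) :
    Thatpoly (k + 1) = Tnat (2 * k + 2) - X * Tnat (2 * k) := by
  rw [Thatpoly, Tpoly, Tpoly, show (2 * ((k : ℤ) + 1) - 1 + 1).toNat = 2 * k + 2 by omega,
    show (2 * ((k : ℤ) + 1) - 3 + 1).toNat = 2 * k by omega]

section CommRing

variable {R : Type*} [CommRing R]

lemma two_mul_sub_one_mul_aeval_Tnat (z : R) (n : ℕ) :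
    (2 * z - 1) * aeval (z * (1 - z)) (Tnat n) = z ^ (n + 1) - (1 - z) ^ (n + 1) := by
  induction n using Tnat.induct with
  | case1 | case2 => simp [Tnat]; ring
  | case3 n ih₁ ih₀ =>
    simp only [Nat.succ_eq_add_one, Tnat_add_two, map_sub, map_mul, aeval_X]
    linear_combination ih₁ - z * (1 - z) * ih₀

lemma two_mul_sub_one_mul_aeval_Tnat_sub_X_mul (z : R) (n : ℕ) :
    (2 * z - 1) * aeval (z * (1 - z)) (Tnat (n + 2) - X * Tnat n) =
      (2 * z - 1) * (z ^ (n + 2) + (1 - z) ^ (n + 2)) := by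
  simp only [map_sub, map_mul, aeval_X]
  linear_combination two_mul_sub_one_mul_aeval_Tnat z (n + 2) -
    z * (1 - z) * two_mul_sub_one_mul_aeval_Tnat z n

end CommRing

section Field

variable {K : Type*} [Field K]

lemma aeval_Tnat_eq_zero_of_pow_eq_pow {a b : K} (hab : a + b ≠ 0) (hne : a ≠ b) {n : ℕ}
    (h : a ^ (n + 1) = b ^ (n + 1)) : aeval (a * b / (a + b) ^ 2) (Tnat n) = 0 := by
  have hclosed := two_mul_sub_one_mul_aeval_Tnat (a / (a + b)) n
  have hcompl : 1 - a / (a + b) = b / (a + b) := by field_simp; ring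
  have hfactor : 2 * (a / (a + b)) - 1 = (a - b) / (a + b) := by field_simp; ring
  rw [hcompl, hfactor, div_pow, div_pow, h, sub_self, ← mul_div_mul_comm, ← sq] at hclosed
  exact (mul_eq_zero.mp hclosed).resolve_left (div_ne_zero (sub_ne_zero.mpr hne) hab)

lemma aeval_Tnat_sub_X_mul_eq_zero_of_pow_eq_neg_pow {a b : K} (hab : a + b ≠ 0) (hne : a ≠ b)
    {n : ℕ} (h : a ^ (n + 2) = -b ^ (n + 2)) :
    aeval (a * b / (a + b) ^ 2) (Tnat (n + 2) - X * Tnat n) = 0 := by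
  have hclosed := two_mul_sub_one_mul_aeval_Tnat_sub_X_mul (a / (a + b)) n
  have hcompl : 1 - a / (a + b) = b / (a + b) := by field_simp; ring
  have hfactor : 2 * (a / (a + b)) - 1 ≠ 0 := by
    rw [show 2 * (a / (a + b)) - 1 = (a - b) / (a + b) by field_simp; ring]
    exact div_ne_zero (sub_ne_zero.mpr hne) hab
  rw [hcompl, div_pow, div_pow, h, ← mul_div_mul_comm, ← sq, neg_div, neg_add_cancel,
    mul_zero] at hclosed
  exact (mul_eq_zero.mp hclosed).resolve_left hfactor

end Field

namespace Complex

lemma exp_mul_I_pow_sub_exp_neg_mul_I_pow (θ : ℂ) (k : ℕ) :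
    exp (θ * I) ^ k - exp (-θ * I) ^ k = 2 * I * sin (k * θ) := by
  rw [← exp_nat_mul, ← exp_nat_mul, ← mul_assoc, show (k : ℂ) * (-θ * I) = -(k * θ) * I by ring]
  linear_combination (-I) * two_sin (k * θ) + (exp (k * θ * I) - exp (-(k * θ) * I)) * I_sq

lemma exp_mul_I_pow_add_exp_neg_mul_I_pow (θ : ℂ) (k : ℕ) :
    exp (θ * I) ^ k + exp (-θ * I) ^ k = 2 * cos (k * θ) := by
  rw [← exp_nat_mul, ← exp_nat_mul, ← mul_assoc, show (k : ℂ) * (-θ * I) = -(k * θ) * I by ring,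
    two_cos]

lemma inv_four_mul_cos_sq_eq (θ : ℂ) :
    (4 * cos θ ^ 2)⁻¹ = exp (θ * I) * exp (-θ * I) / (exp (θ * I) + exp (-θ * I)) ^ 2 := by
  rw [← exp_add, ← two_cos]
  ring_nf
  simp

lemma exp_mul_I_add_exp_neg_mul_I_ne_zero {θ : ℂ} (hc : cos θ ≠ 0) :
    exp (θ * I) + exp (-θ * I) ≠ 0 := by
  rw [← two_cos]
  exact mul_ne_zero two_ne_zero hc

lemma exp_mul_I_ne_exp_neg_mul_I {θ : ℂ} (hs : sin θ ≠ 0) : exp (θ * I) ≠ exp (-θ * I) := by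
  rw [ne_eq, ← sub_eq_zero, ← pow_one (exp (θ * I)), ← pow_one (exp (-θ * I)),
    exp_mul_I_pow_sub_exp_neg_mul_I_pow]
  simpa [I_ne_zero] using hs

lemma cos_ofReal_ne_zero {x : ℝ} (hx : x ∈ Set.Ioo 0 (Real.pi / 2)) : cos (x : ℂ) ≠ 0 := by
  rw [← ofReal_cos, ofReal_ne_zero]
  exact (Real.cos_pos_of_mem_Ioo ⟨by linarith [hx.1, Real.pi_pos], hx.2⟩).ne'

lemma sin_ofReal_ne_zero {x : ℝ} (hx : x ∈ Set.Ioo 0 (Real.pi / 2)) : sin (x : ℂ) ≠ 0 := by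
  rw [← ofReal_sin, ofReal_ne_zero]
  exact (Real.sin_pos_of_pos_of_lt_pi hx.1 (by linarith [hx.2, Real.pi_pos])).ne'

lemma aeval_Tnat_inv_four_mul_cos_sq {θ : ℂ} (hc : cos θ ≠ 0) (hs : sin θ ≠ 0) {n : ℕ}
    (h : sin ((n + 1) * θ) = 0) : aeval (4 * cos θ ^ 2)⁻¹ (Tnat n) = 0 := by
  rw [inv_four_mul_cos_sq_eq]
  refine aeval_Tnat_eq_zero_of_pow_eq_pow (exp_mul_I_add_exp_neg_mul_I_ne_zero hc)
    (exp_mul_I_ne_exp_neg_mul_I hs) ?_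
  rw [← sub_eq_zero, exp_mul_I_pow_sub_exp_neg_mul_I_pow]
  simp [h]

lemma aeval_Tnat_sub_X_mul_inv_four_mul_cos_sq {θ : ℂ} (hc : cos θ ≠ 0) (hs : sin θ ≠ 0)
    {n : ℕ} (h : cos ((n + 2) * θ) = 0) :
    aeval (4 * cos θ ^ 2)⁻¹ (Tnat (n + 2) - X * Tnat n) = 0 := by
  rw [inv_four_mul_cos_sq_eq]
  refine aeval_Tnat_sub_X_mul_eq_zero_of_pow_eq_neg_pow (exp_mul_I_add_exp_neg_mul_I_ne_zero hc)
    (exp_mul_I_ne_exp_neg_mul_I hs) ?_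
  rw [← add_eq_zero_iff_eq_neg, exp_mul_I_pow_add_exp_neg_mul_I_pow]
  simp [h]

end Complex

open Real

def HasSimpleRealRoots (p : ℤ[X]) (d : ℕ) : Prop :=
  (∀ z : ℂ, aeval z p = 0 → z.im = 0) ∧ (p.map (Int.castRingHom ℂ)).roots.Nodup ∧
    {x : ℝ | aeval x p = 0}.ncard = d

lemma aeval_ofReal_eq_zero_iff (p : ℤ[X]) (x : ℝ) : aeval (x : ℂ) p = 0 ↔ aeval x p = 0 := by
  rw [← Complex.coe_algebraMap, aeval_algebraMap_apply, Complex.coe_algebraMap,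
    Complex.ofReal_eq_zero]

lemma hasSimpleRealRoots_of_natDegree_le {p : ℤ[X]} (hp : p ≠ 0) (s : Finset ℝ)
    (hdeg : p.natDegree ≤ s.card) (hs : ∀ x ∈ s, aeval (x : ℂ) p = 0) :
    HasSimpleRealRoots p s.card := by
  set P := p.map (Int.castRingHom ℂ)
  have hP : P ≠ 0 := (Polynomial.map_ne_zero_iff (RingHom.injective_int _)).mpr hp
  have hmem (z : ℂ) : z ∈ P.roots ↔ aeval z p = 0 := by
    rw [mem_roots hP, IsRoot, ← eval_map_algebraMap, algebraMap_int_eq]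
  have hnodup := s.nodup.map Complex.ofReal_injective
  have hroots : s.val.map ((↑) : ℝ → ℂ) = P.roots := by
    refine Multiset.eq_of_le_of_card_le ((Multiset.le_iff_subset hnodup).mpr fun z hz => ?_) ?_
    · obtain ⟨x, hx, rfl⟩ := Multiset.mem_map.mp hz
      exact (hmem _).mpr (hs x hx)
    · calc Multiset.card P.roots ≤ P.natDegree := card_roots' P
        _ ≤ p.natDegree := natDegree_map_le
        _ ≤ s.card := hdeg
        _ = _ := by simp
  have hreal (z : ℂ) (hz : aeval z p = 0) : ∃ x ∈ s, (x : ℂ) = z := by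
    rw [← hmem, ← hroots] at hz
    simpa using hz
  refine ⟨fun z hz => ?_, hroots ▸ hnodup, ?_⟩
  · obtain ⟨x, -, rfl⟩ := hreal z hz
    exact Complex.ofReal_im x
  · suffices {x : ℝ | aeval x p = 0} = s by rw [this, Set.ncard_coe_finset]
    ext x
    rw [Set.mem_ofPred_eq, Finset.mem_coe, ← aeval_ofReal_eq_zero_iff]
    refine ⟨fun hx => ?_, hs x⟩
    obtain ⟨y, hy, hyx⟩ := hreal x hx
    rwa [← Complex.ofReal_injective hyx]

lemma injOn_inv_four_mul_cos_sq : Set.InjOn (fun x => (4 * cos x ^ 2)⁻¹) (Set.Ioo 0 (π / 2)) := by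
  intro x hx y hy hxy
  have hpos {z : ℝ} (hz : z ∈ Set.Ioo 0 (π / 2)) : 0 < cos z :=
    cos_pos_of_mem_Ioo ⟨by linarith [hz.1, pi_pos], hz.2⟩
  have hIcc {z : ℝ} (hz : z ∈ Set.Ioo 0 (π / 2)) : z ∈ Set.Icc 0 π :=
    ⟨hz.1.le, by linarith [hz.2, pi_pos]⟩
  refine injOn_cos (hIcc hx) (hIcc hy) ((sq_eq_sq₀ (hpos hx).le (hpos hy).le).mp ?_)
  simpa using hxy

lemma hasSimpleRealRoots_of_angles {p : ℤ[X]} (hp : p ≠ 0) {d : ℕ} (hdeg : p.natDegree ≤ d)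
    {φ : ℕ → ℝ} (hφ : Function.Injective φ) (hφ_mem : ∀ k ∈ Finset.Icc 1 d, φ k ∈ Set.Ioo 0 (π / 2))
    (hroot : ∀ k ∈ Finset.Icc 1 d, aeval (4 * Complex.cos (φ k) ^ 2)⁻¹ p = 0) :
    HasSimpleRealRoots p d := by
  set s := (Finset.Icc 1 d).image fun k => (4 * cos (φ k) ^ 2)⁻¹
  have hcard : s.card = d := by
    rw [Finset.card_image_of_injOn fun k hk l hl hkl =>
      hφ (injOn_inv_four_mul_cos_sq (hφ_mem k hk) (hφ_mem l hl) hkl), Nat.card_Icc,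
      Nat.add_sub_cancel]
  refine hcard ▸ hasSimpleRealRoots_of_natDegree_le hp s (hcard ▸ hdeg) ?_
  simp only [s, Finset.mem_image]
  rintro _ ⟨k, hk, rfl⟩
  exact_mod_cast hroot k hk

lemma hasSimpleRealRoots_Tnat (n : ℕ) : HasSimpleRealRoots (Tnat n) (n / 2) := by
  have hn : (0 : ℝ) < n + 1 := by positivity
  have hmem : ∀ k ∈ Finset.Icc 1 (n / 2), (k * π / (n + 1) : ℝ) ∈ Set.Ioo 0 (π / 2) := by
    intro k hk
    obtain ⟨hk₁, hk₂⟩ := Finset.mem_Icc.mp hk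
    have hk_one : (1 : ℝ) ≤ k := by exact_mod_cast hk₁
    have hk_le : 2 * (k : ℝ) ≤ n := by exact_mod_cast (by omega : 2 * k ≤ n)
    constructor
    · positivity
    · rw [div_lt_iff₀ hn]; nlinarith [pi_pos]
  refine hasSimpleRealRoots_of_angles (Tnat_ne_zero n) (natDegree_Tnat_le n)
    (fun k l hkl => ?_) hmem fun k hk => ?_
  · simpa [hn.ne', pi_ne_zero] using hkl
  · refine Complex.aeval_Tnat_inv_four_mul_cos_sq (Complex.cos_ofReal_ne_zero (hmem k hk))
      (Complex.sin_ofReal_ne_zero (hmem k hk)) ?_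
    have : sin ((n + 1) * (k * π / (n + 1))) = 0 := by
      rw [mul_div_cancel₀ _ hn.ne']; exact sin_nat_mul_pi k
    exact_mod_cast this

lemma hasSimpleRealRoots_Tnat_add_two_sub_X_mul (n : ℕ) :
    HasSimpleRealRoots (Tnat (n + 2) - X * Tnat n) (n / 2 + 1) := by
  have hn : (0 : ℝ) < 2 * (n + 2) := by positivity
  have hmem : ∀ j ∈ Finset.Icc 1 (n / 2 + 1),
      ((2 * j - 1) * π / (2 * (n + 2)) : ℝ) ∈ Set.Ioo 0 (π / 2) := by
    intro j hj
    obtain ⟨hj₁, hj₂⟩ := Finset.mem_Icc.mp hj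
    have hj_one : (1 : ℝ) ≤ j := by exact_mod_cast hj₁
    have hj_le : 2 * (j : ℝ) ≤ n + 2 := by exact_mod_cast (by omega : 2 * j ≤ n + 2)
    constructor
    · exact div_pos (mul_pos (by linarith) pi_pos) hn
    · rw [div_lt_iff₀ hn]; nlinarith [pi_pos]
  refine hasSimpleRealRoots_of_angles (Tnat_add_two_sub_X_mul_ne_zero n)
    (natDegree_Tnat_add_two_sub_X_mul_le n) (fun k l hkl => ?_) hmem fun j hj => ?_
  · simpa [hn.ne', pi_ne_zero] using hkl
  · refine Complex.aeval_Tnat_sub_X_mul_inv_four_mul_cos_sq (Complex.cos_ofReal_ne_zero (hmem j hj))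
      (Complex.sin_ofReal_ne_zero (hmem j hj)) ?_
    have : cos ((n + 2) * ((2 * j - 1) * π / (2 * (n + 2)))) = 0 := by
      rw [cos_eq_zero_iff]
      exact ⟨j - 1, by field_simp; push_cast; ring⟩
    exact_mod_cast this

theorem stmt3 :
    (∀ m : ℤ, 0 ≤ m →
      (∀ z : ℂ, Polynomial.aeval z (Tpoly m) = 0 → z.im = 0) ∧
      ((Tpoly m).map (Int.castRingHom ℂ)).roots.Nodup ∧
      {x : ℝ | Polynomial.aeval x (Tpoly m) = 0}.ncard = ((m + 1) / 2).toNat) ∧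
    (∀ m : ℤ, 1 ≤ m →
      (∀ z : ℂ, Polynomial.aeval z (Thatpoly m) = 0 → z.im = 0) ∧
      ((Thatpoly m).map (Int.castRingHom ℂ)).roots.Nodup ∧
      {x : ℝ | Polynomial.aeval x (Thatpoly m) = 0}.ncard = m.toNat) := by
  refine ⟨fun m hm => ?_, fun m hm => ?_⟩
  · obtain ⟨n, rfl⟩ := Int.eq_ofNat_of_zero_le hm
    show HasSimpleRealRoots (Tpoly n) _
    rw [Tpoly_natCast, show ((n + 1 : ℤ) / 2).toNat = (n + 1) / 2 by omega]
    exact hasSimpleRealRoots_Tnat (n + 1)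
  · obtain ⟨k, rfl⟩ : ∃ k : ℕ, m = k + 1 := ⟨(m - 1).toNat, by omega⟩
    show HasSimpleRealRoots (Thatpoly (k + 1)) _
    rw [Thatpoly_natCast_add_one, show ((k : ℤ) + 1).toNat = 2 * k / 2 + 1 by omega]
    exact hasSimpleRealRoots_Tnat_add_two_sub_X_mul (2 * k)
end

section
/- For every integer q ≥ 0, the generating function G_q of triangular-lattice directed animals over ℕ with single source {q} satisfies, in ℤ[[t]], the identity (1 − 𝒟(t)) · G_q(t) = (1 − 𝒟(t)^{q+1}) · 𝒟(t). -/
/-- A triangular-lattice directed animal over positions `Q ⊆ ℤ` with source `S`: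
sites on line `0` are exactly the source, and every higher site is supported at
the left, at the right, or at the center (two lines below). -/
def IsTriAnimal (Q : Set ℤ) (S : Finset ℤ) (A : Finset (ℤ × ℕ)) : Prop :=
  (∀ x ∈ A, x.1 ∈ Q) ∧
  (∀ q : ℤ, (q, 0) ∈ A ↔ q ∈ S) ∧
  ∀ x ∈ A, 1 ≤ x.2 →
    (x.1 - 1, x.2 - 1) ∈ A ∨ (x.1 + 1, x.2 - 1) ∈ A ∨ (2 ≤ x.2 ∧ (x.1, x.2 - 2) ∈ A)

/-- A square-lattice directed animal over positions `Q ⊆ ℤ` with source `S`. -/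
def IsSqAnimal (Q : Set ℤ) (S : Finset ℤ) (A : Finset (ℤ × ℕ)) : Prop :=
  (∀ x ∈ A, x.1 ∈ Q) ∧
  (∀ q : ℤ, (q, 0) ∈ A ↔ q ∈ S) ∧
  ∀ x ∈ A, 1 ≤ x.2 →
    (x.1 - 1, x.2 - 1) ∈ A ∨ (x.1 + 1, x.2 - 1) ∈ A

/-- Number of triangular-lattice directed animals over `Q` with source `S` and area `n`. -/
noncomputable def triCount (Q : Set ℤ) (S : Finset ℤ) (n : ℕ) : ℕ :=
  {A : Finset (ℤ × ℕ) | IsTriAnimal Q S A ∧ A.card = n}.ncard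

/-- Number of square-lattice directed animals over `Q` with source `S` and area `n`. -/
noncomputable def sqCount (Q : Set ℤ) (S : Finset ℤ) (n : ℕ) : ℕ :=
  {A : Finset (ℤ × ℕ) | IsSqAnimal Q S A ∧ A.card = n}.ncard

/-- Generating function of triangular-lattice directed animals over `Q` with source `S`. -/
noncomputable def triGF (Q : Set ℤ) (S : Finset ℤ) : PowerSeries ℤ :=
  PowerSeries.mk fun n => (triCount Q S n : ℤ)

/-- Generating function of square-lattice directed animals over `Q` with source `S`. -/
noncomputable def sqGF (Q : Set ℤ) (S : Finset ℤ) : PowerSeries ℤ :=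
  PowerSeries.mk fun n => (sqCount Q S n : ℤ)

/-!
Cut an animal `A` with source `q` along its heap order: the left part consists of the cells
lying above some cell in a column `< q`, the right part of the other cells. The right part is an
animal with source `q` in the columns `≥ q`, i.e. a translated half-animal. When the left part is
nonempty, letting it fall (each cell dropping as far as the cells below it allow) yields an
animal with source `q - 1`, and `A` is recovered by letting that animal fall back onto the right
part. Hence `G_q = 𝒟 · (1 + G_{q-1})`, and the identity follows by induction on `q`.
-/

open Finset

namespace TriAnimal

/-- A cell in column `c` resting on a cell in column `d` lies `gap d c` levels above it: one level
on a diagonal, two straight above. -/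
def gap (d c : ℤ) : ℕ := 2 - (d - c).natAbs

lemma one_le_gap {d c : ℤ} (h : (d - c).natAbs ≤ 1) : 1 ≤ gap d c := by
  unfold gap; omega

lemma level_induction {P : ℤ × ℕ → Prop} (x : ℤ × ℕ)
    (h : ∀ x : ℤ × ℕ, (∀ y : ℤ × ℕ, y.2 < x.2 → P y) → P x) : P x :=
  (measure Prod.snd).wf.induction x h

lemma support_iff {A : Finset (ℤ × ℕ)} {x : ℤ × ℕ} (hx : 1 ≤ x.2) :
    ((x.1 - 1, x.2 - 1) ∈ A ∨ (x.1 + 1, x.2 - 1) ∈ A ∨ (2 ≤ x.2 ∧ (x.1, x.2 - 2) ∈ A)) ↔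
      ∃ y ∈ A, (y.1 - x.1).natAbs ≤ 1 ∧ y.2 + gap y.1 x.1 = x.2 := by
  constructor
  · rintro (h | h | ⟨h2, h⟩) <;> refine ⟨_, h, ?_, ?_⟩ <;> simp [gap] <;> omega
  · rintro ⟨⟨c, l⟩, hy, hn, hg⟩
    simp only [gap] at hn hg ⊢
    rcases (by omega : c = x.1 - 1 ∨ c = x.1 + 1 ∨ c = x.1) with rfl | rfl | rfl
    · left; convert hy using 2; omega
    · right; left; convert hy using 2; omega
    · right; right; exact ⟨by omega, by convert hy using 2; omega⟩

end TriAnimal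

open TriAnimal

section IsTriAnimal

variable {Q : Set ℤ} {S : Finset ℤ} {s : ℤ} {A : Finset (ℤ × ℕ)}

lemma isTriAnimal_iff : IsTriAnimal Q S A ↔ (∀ x ∈ A, x.1 ∈ Q) ∧
    (∀ c : ℤ, (c, 0) ∈ A ↔ c ∈ S) ∧
    ∀ x ∈ A, 1 ≤ x.2 → ∃ y ∈ A, (y.1 - x.1).natAbs ≤ 1 ∧ y.2 + gap y.1 x.1 = x.2 := by
  refine and_congr_right fun _ => and_congr_right fun _ => ?_
  exact forall₂_congr fun x _ => forall_congr' fun hx => support_iff hx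

lemma IsTriAnimal.exists_support (hA : IsTriAnimal Q S A) {x : ℤ × ℕ} (hx : x ∈ A)
    (h : 1 ≤ x.2) : ∃ y ∈ A, (y.1 - x.1).natAbs ≤ 1 ∧ y.2 + gap y.1 x.1 = x.2 :=
  (isTriAnimal_iff.mp hA).2.2 x hx h

lemma IsTriAnimal.mono {Q' : Set ℤ} (hA : IsTriAnimal Q S A) (hQ : Q ⊆ Q') :
    IsTriAnimal Q' S A :=
  ⟨fun x hx => hQ (hA.1 x hx), hA.2⟩

lemma IsTriAnimal.source_mem (hA : IsTriAnimal Q {s} A) : (s, 0) ∈ A :=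
  (hA.2.1 s).mpr (mem_singleton_self s)

lemma IsTriAnimal.eq_source (hA : IsTriAnimal Q {s} A) {x : ℤ × ℕ} (hx : x ∈ A)
    (h : x.2 = 0) : x = (s, 0) := by
  obtain ⟨c, l⟩ := x
  obtain rfl : l = 0 := h
  rw [mem_singleton.mp ((hA.2.1 c).mp hx)]

lemma IsTriAnimal.parity (hA : IsTriAnimal Q {s} A) {x : ℤ × ℕ} (hx : x ∈ A) :
    (x.1 + x.2 - s) % 2 = 0 := by
  induction x using level_induction with
  | h x ih =>
    rcases Nat.eq_zero_or_pos x.2 with h0 | h1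
    · rw [hA.eq_source hx h0]; simp
    · obtain ⟨y, hy, hn, hg⟩ := hA.exists_support hx h1
      have := ih y (by have := one_le_gap hn; omega) hy
      simp only [gap] at hg
      omega

lemma IsTriAnimal.eq_of_level_eq (hA : IsTriAnimal Q {s} A) {x y : ℤ × ℕ} (hx : x ∈ A)
    (hy : y ∈ A) (hn : (y.1 - x.1).natAbs ≤ 1) (hl : y.2 = x.2) : y = x := by
  have := hA.parity hx
  have := hA.parity hy
  exact Prod.ext (by omega) hl

lemma IsTriAnimal.level_add_gap_le (hA : IsTriAnimal Q {s} A) {x y : ℤ × ℕ} (hx : x ∈ A)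
    (hy : y ∈ A) (hn : (y.1 - x.1).natAbs ≤ 1) (hl : y.2 < x.2) : y.2 + gap y.1 x.1 ≤ x.2 := by
  have := hA.parity hx
  have := hA.parity hy
  simp only [gap]
  omega

lemma IsTriAnimal.natAbs_sub_le_level (hA : IsTriAnimal Q {s} A) {x : ℤ × ℕ} (hx : x ∈ A) :
    (x.1 - s).natAbs ≤ x.2 := by
  induction x using level_induction with
  | h x ih =>
    rcases Nat.eq_zero_or_pos x.2 with h0 | h1
    · rw [hA.eq_source hx h0]; simp
    · obtain ⟨y, hy, hn, hg⟩ := hA.exists_support hx h1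
      have := one_le_gap hn
      have := ih y (by omega) hy
      omega

lemma IsTriAnimal.level_lt_two_mul_card (hA : IsTriAnimal Q {s} A) {x : ℤ × ℕ} (hx : x ∈ A) :
    x.2 < 2 * #(A.filter fun y => y.2 ≤ x.2) := by
  induction x using level_induction with
  | h x ih =>
    have hpos : 0 < #(A.filter fun y => y.2 ≤ x.2) :=
      card_pos.mpr ⟨x, mem_filter.mpr ⟨hx, le_rfl⟩⟩
    rcases Nat.eq_zero_or_pos x.2 with h0 | h1
    · omega
    · obtain ⟨y, hy, hn, hg⟩ := hA.exists_support hx h1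
      have hgap : 1 ≤ gap y.1 x.1 ∧ gap y.1 x.1 ≤ 2 := ⟨one_le_gap hn, by unfold gap; omega⟩
      have hsub : insert x (A.filter fun z => z.2 ≤ y.2) ⊆ A.filter fun z => z.2 ≤ x.2 := by
        intro z hz
        rcases mem_insert.mp hz with rfl | hz
        · exact mem_filter.mpr ⟨hx, le_rfl⟩
        · exact mem_filter.mpr ⟨(mem_filter.mp hz).1, by have := (mem_filter.mp hz).2; omega⟩
      have hcard := card_le_card hsub
      rw [card_insert_of_notMem fun h => by have := (mem_filter.mp h).2; omega] at hcard
      have := ih y (by omega) hy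
      omega

end IsTriAnimal

lemma finite_setOf_isTriAnimal (Q : Set ℤ) (s : ℤ) (n : ℕ) :
    {A : Finset (ℤ × ℕ) | IsTriAnimal Q {s} A ∧ #A = n}.Finite := by
  refine ((Icc (s - 2 * n) (s + 2 * n) ×ˢ range (2 * n)).powerset.finite_toSet).subset ?_
  rintro A ⟨hA, rfl⟩
  rw [mem_coe, mem_powerset]
  intro x hx
  have hlevel := hA.level_lt_two_mul_card hx
  have := card_le_card (filter_subset (fun y => y.2 ≤ x.2) A)
  have := hA.natAbs_sub_le_level hx
  simp only [mem_product, mem_Icc, mem_range]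
  omega

namespace TriAnimal

/-- The cell `x` lies above a cell in a column `< q` in the heap order of `A`. -/
inductive Above (A : Finset (ℤ × ℕ)) (q : ℤ) : ℤ × ℕ → Prop
  | of_lt {x : ℤ × ℕ} : x.1 < q → Above A q x
  | step {x y : ℤ × ℕ} : y ∈ A → (y.1 - x.1).natAbs ≤ 1 → y.2 < x.2 → Above A q y → Above A q x

open Classical in
noncomputable def leftPart (q : ℤ) (A : Finset (ℤ × ℕ)) : Finset (ℤ × ℕ) :=
  A.filter (Above A q)

open Classical in
noncomputable def rightPart (q : ℤ) (A : Finset (ℤ × ℕ)) : Finset (ℤ × ℕ) :=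
  A.filter fun x => ¬ Above A q x

section Parts

open Classical

variable {q : ℤ} {A : Finset (ℤ × ℕ)} {x y : ℤ × ℕ}

lemma mem_leftPart : x ∈ leftPart q A ↔ x ∈ A ∧ Above A q x := mem_filter

lemma mem_rightPart : x ∈ rightPart q A ↔ x ∈ A ∧ ¬ Above A q x := mem_filter

lemma leftPart_subset : leftPart q A ⊆ A := filter_subset _ A

lemma rightPart_subset : rightPart q A ⊆ A := filter_subset _ A

lemma rightPart_union_leftPart : rightPart q A ∪ leftPart q A = A := by
  unfold rightPart leftPart
  rw [union_comm, filter_union_filter_not_eq]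

lemma card_rightPart_add_card_leftPart : #(rightPart q A) + #(leftPart q A) = #A := by
  unfold rightPart leftPart
  rw [add_comm, card_filter_add_card_filter_not]

lemma notMem_leftPart_of_mem_rightPart (hx : x ∈ rightPart q A) : x ∉ leftPart q A :=
  fun h => (mem_rightPart.mp hx).2 (mem_leftPart.mp h).2

lemma le_of_mem_rightPart (hx : x ∈ rightPart q A) : q ≤ x.1 :=
  not_lt.mp fun h => (mem_rightPart.mp hx).2 (.of_lt h)

lemma mem_rightPart_of_lt (hx : x ∈ rightPart q A) (hy : y ∈ A)
    (hn : (y.1 - x.1).natAbs ≤ 1) (hl : y.2 < x.2) : y ∈ rightPart q A :=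
  mem_rightPart.mpr ⟨hy, fun h => (mem_rightPart.mp hx).2 (.step hy hn hl h)⟩

lemma leftPart_eq_empty_iff : leftPart q A = ∅ ↔ ∀ x ∈ A, q ≤ x.1 := by
  refine ⟨fun h x hx => le_of_mem_rightPart (A := A) ?_, fun h => ?_⟩
  · rw [← rightPart_union_leftPart (q := q) (A := A), h, union_empty] at hx
    exact hx
  · refine eq_empty_of_forall_notMem fun x hx => ?_
    obtain ⟨hxA, habove⟩ := mem_leftPart.mp hx
    clear hx
    induction habove with
    | of_lt hlt => exact absurd (h _ hxA) (not_le.mpr hlt)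
    | step hy _ _ _ ih => exact ih hy

end Parts

def floorHeight (F : Finset (ℤ × ℕ)) (c : ℤ) : ℕ :=
  (F.filter fun y => (y.1 - c).natAbs ≤ 1).sup fun y => y.2 + gap y.1 c

/-- The level of the cell `x` of `B` once `B` is dropped onto the floor `F`, each cell
falling until it rests on `F` or on the already dropped cells of `B` below it. -/
def settleLevel (F B : Finset (ℤ × ℕ)) (x : ℤ × ℕ) : ℕ :=
  max (floorHeight F x.1)
    ((B.filter fun y => (y.1 - x.1).natAbs ≤ 1 ∧ y.2 < x.2).attach.sup
      fun y => settleLevel F B y + gap y.1.1 x.1)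
termination_by x.2
decreasing_by exact (mem_filter.mp y.2).2.2

def settle (F B : Finset (ℤ × ℕ)) : Finset (ℤ × ℕ) :=
  B.image fun x => (x.1, settleLevel F B x)

def IsLevelSeparated (B : Finset (ℤ × ℕ)) : Prop :=
  ∀ u ∈ B, ∀ v ∈ B, (u.1 - v.1).natAbs ≤ 1 → u.2 = v.2 → u = v

section Settle

variable {F F' B : Finset (ℤ × ℕ)} {x y : ℤ × ℕ}

lemma settleLevel_eq_max (x : ℤ × ℕ) :
    settleLevel F B x = max (floorHeight F x.1)
      ((B.filter fun y => (y.1 - x.1).natAbs ≤ 1 ∧ y.2 < x.2).sup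
        fun y => settleLevel F B y + gap y.1 x.1) := by
  rw [settleLevel, sup_attach (f := fun y => settleLevel F B y + gap y.1 x.1)]

lemma le_floorHeight {c : ℤ} (hy : y ∈ F) (hn : (y.1 - c).natAbs ≤ 1) :
    y.2 + gap y.1 c ≤ floorHeight F c :=
  le_sup (f := fun y => y.2 + gap y.1 c) (mem_filter.mpr ⟨hy, hn⟩)

lemma floorHeight_le_settleLevel (x : ℤ × ℕ) : floorHeight F x.1 ≤ settleLevel F B x := by
  rw [settleLevel_eq_max]; exact le_max_left _ _

lemma add_gap_le_settleLevel (hy : y ∈ B) (hn : (y.1 - x.1).natAbs ≤ 1) (hl : y.2 < x.2) :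
    settleLevel F B y + gap y.1 x.1 ≤ settleLevel F B x := by
  rw [settleLevel_eq_max x]
  exact le_max_of_le_right
    (le_sup (f := fun y => settleLevel F B y + gap y.1 x.1) (mem_filter.mpr ⟨hy, hn, hl⟩))

lemma settleLevel_lt_settleLevel (hy : y ∈ B) (hn : (y.1 - x.1).natAbs ≤ 1) (hl : y.2 < x.2) :
    settleLevel F B y < settleLevel F B x :=
  (Nat.lt_add_of_pos_right (one_le_gap hn)).trans_le (add_gap_le_settleLevel hy hn hl)

lemma settleLevel_le {v : ℕ}
    (hF : ∀ y ∈ F, (y.1 - x.1).natAbs ≤ 1 → y.2 + gap y.1 x.1 ≤ v)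
    (hB : ∀ y ∈ B, (y.1 - x.1).natAbs ≤ 1 → y.2 < x.2 → settleLevel F B y + gap y.1 x.1 ≤ v) :
    settleLevel F B x ≤ v := by
  rw [settleLevel_eq_max]
  refine max_le (Finset.sup_le fun y hy => ?_) (Finset.sup_le fun y hy => ?_)
  · exact hF y (mem_filter.mp hy).1 (mem_filter.mp hy).2
  · exact hB y (mem_filter.mp hy).1 (mem_filter.mp hy).2.1 (mem_filter.mp hy).2.2

lemma exists_eq_settleLevel (h : 1 ≤ settleLevel F B x) :
    (∃ y ∈ F, (y.1 - x.1).natAbs ≤ 1 ∧ y.2 + gap y.1 x.1 = settleLevel F B x) ∨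
    (∃ y ∈ B, (y.1 - x.1).natAbs ≤ 1 ∧ y.2 < x.2 ∧
      settleLevel F B y + gap y.1 x.1 = settleLevel F B x) := by
  by_contra! hne
  have : settleLevel F B x ≤ settleLevel F B x - 1 := settleLevel_le
    (fun y hy hn => by
      have := le_floorHeight hy hn
      have := floorHeight_le_settleLevel (F := F) (B := B) x
      have := hne.1 y hy hn
      omega)
    (fun y hy hn hl => by
      have := add_gap_le_settleLevel (F := F) hy hn hl
      have := hne.2 y hy hn hl
      omega)
  omega

lemma mk_mem_settle (hx : x ∈ B) : (x.1, settleLevel F B x) ∈ settle F B :=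
  mem_image_of_mem _ hx

lemma mem_settle {z : ℤ × ℕ} : z ∈ settle F B ↔ ∃ x ∈ B, (x.1, settleLevel F B x) = z :=
  mem_image

lemma card_settle : #(settle F B) = #B := by
  refine card_image_of_injOn fun x hx y hy hxy => ?_
  obtain ⟨hc, hl⟩ := Prod.mk.inj hxy
  have hn : ∀ u v : ℤ × ℕ, u.1 = v.1 → (u.1 - v.1).natAbs ≤ 1 := fun u v h => by omega
  rcases lt_trichotomy x.2 y.2 with h | h | h
  · exact absurd hl (settleLevel_lt_settleLevel hx (hn x y hc) h).ne
  · exact Prod.ext hc h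
  · exact absurd hl (settleLevel_lt_settleLevel hy (hn y x hc.symm) h).ne'

lemma settleLevel_lt_settleLevel_iff (hB : IsLevelSeparated B) (hx : x ∈ B) (hy : y ∈ B)
    (hn : (y.1 - x.1).natAbs ≤ 1) : settleLevel F B y < settleLevel F B x ↔ y.2 < x.2 := by
  refine ⟨fun h => ?_, settleLevel_lt_settleLevel hy hn⟩
  rcases lt_trichotomy y.2 x.2 with h' | h' | h'
  · exact h'
  · rw [hB y hy x hx hn h'] at h; exact absurd h (lt_irrefl _)
  · exact absurd h (settleLevel_lt_settleLevel hx (by omega) h').not_gt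

lemma level_lt_settleLevel (hy : y ∈ F)
    (hn : (y.1 - x.1).natAbs ≤ 1) : y.2 < settleLevel F B x :=
  (Nat.lt_add_of_pos_right (one_le_gap hn)).trans_le
    ((le_floorHeight hy hn).trans (floorHeight_le_settleLevel x))

lemma disjoint_settle (F B : Finset (ℤ × ℕ)) : Disjoint F (settle F B) := by
  refine disjoint_right.mpr fun z hz hzF => ?_
  obtain ⟨x, -, rfl⟩ := mem_settle.mp hz
  exact (level_lt_settleLevel (B := B) hzF (by simp)).false

/-- Dropping is insensitive to a previous drop, which preserves the heap order of `B`. -/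
lemma settleLevel_settle (hB : IsLevelSeparated B) (hx : x ∈ B) :
    settleLevel F (settle F' B) (x.1, settleLevel F' B x) = settleLevel F B x := by
  induction x using level_induction with
  | h x ih =>
    refine le_antisymm (settleLevel_le (fun y hy hn => ?_) fun z hz hn hl => ?_)
      (settleLevel_le (fun y hy hn => ?_) fun y hy hn hl => ?_)
    · exact (le_floorHeight hy hn).trans (floorHeight_le_settleLevel x)
    · obtain ⟨y, hy, rfl⟩ := mem_settle.mp hz
      have hyx := (settleLevel_lt_settleLevel_iff hB hx hy hn).mp hl
      rw [ih y hyx hy]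
      exact add_gap_le_settleLevel (x := x) hy hn hyx
    · exact (le_floorHeight hy hn).trans (floorHeight_le_settleLevel (x.1, settleLevel F' B x))
    · rw [← ih y hl hy]
      exact add_gap_le_settleLevel (x := (x.1, settleLevel F' B x)) (mk_mem_settle hy) hn
        (settleLevel_lt_settleLevel hy hn hl)

lemma settle_settle (hB : IsLevelSeparated B) : settle F (settle F' B) = settle F B :=
  image_image.trans (image_congr fun _ hx => Prod.ext rfl (settleLevel_settle hB hx))

lemma settle_eq_self (h : ∀ x ∈ B, settleLevel F B x = x.2) : settle F B = B := by
  conv_rhs => rw [← image_id (s := B)]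
  exact image_congr fun x hx => Prod.ext rfl (h x hx)

end Settle

end TriAnimal

section Decomposition

variable {Q : Set ℤ} {q s : ℤ} {A F B H : Finset (ℤ × ℕ)} {x z : ℤ × ℕ}

lemma IsTriAnimal.isLevelSeparated (hA : IsTriAnimal Q {s} A) (hB : B ⊆ A) :
    IsLevelSeparated B :=
  fun _ hu _ hv hn hl => hA.eq_of_level_eq (hB hv) (hB hu) hn hl

lemma IsTriAnimal.settleLevel_eq_level (hA : IsTriAnimal Q {s} A) (hFB : F ∪ B = A)
    (hdisj : Disjoint F B)
    (hF : ∀ x ∈ F, ∀ y ∈ A, (y.1 - x.1).natAbs ≤ 1 → y.2 < x.2 → y ∈ F) (hx : x ∈ B) :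
    settleLevel F B x = x.2 := by
  have hxA : x ∈ A := hFB ▸ mem_union_right F hx
  induction x using level_induction with
  | h x ih =>
    refine le_antisymm (settleLevel_le (fun y hy hn => ?_) fun y hy hn hl => ?_) ?_
    · have hyA : y ∈ A := hFB ▸ mem_union_left B hy
      refine hA.level_add_gap_le hxA hyA hn ?_
      rcases lt_trichotomy y.2 x.2 with h | h | h
      · exact h
      · exact absurd hx (disjoint_left.mp hdisj (hA.eq_of_level_eq hxA hyA hn h ▸ hy))
      · exact absurd hx (disjoint_left.mp hdisj (hF y hy x hxA (by omega) h))
    · rw [ih y hl hy (hFB ▸ mem_union_right F hy)]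
      exact hA.level_add_gap_le hxA (hFB ▸ mem_union_right F hy) hn hl
    · rcases Nat.eq_zero_or_pos x.2 with h0 | h1
      · exact h0 ▸ Nat.zero_le _
      obtain ⟨y, hyA, hn, hg⟩ := hA.exists_support hxA h1
      rw [← hFB] at hyA
      rcases mem_union.mp hyA with hy | hy
      · exact hg ▸ (le_floorHeight hy hn).trans (floorHeight_le_settleLevel x)
      · have hl : y.2 < x.2 := by have := one_le_gap hn; omega
        rw [← hg, ← ih y hl hy (hFB ▸ hyA)]
        exact add_gap_le_settleLevel hy hn hl

lemma IsTriAnimal.settle_empty (hA : IsTriAnimal Q {s} A) : settle ∅ A = A :=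
  settle_eq_self fun _ hx =>
    hA.settleLevel_eq_level (empty_union A) (disjoint_empty_left A) (by simp) hx

lemma IsTriAnimal.settle_rightPart_settle_leftPart (hA : IsTriAnimal Q {s} A) :
    settle (rightPart q A) (settle ∅ (leftPart q A)) = leftPart q A := by
  rw [settle_settle (hA.isLevelSeparated leftPart_subset)]
  refine settle_eq_self fun x hx => hA.settleLevel_eq_level rightPart_union_leftPart ?_
    (fun x hx y hy hn hl => mem_rightPart_of_lt hx hy hn hl) hx
  exact disjoint_left.mpr fun _ => notMem_leftPart_of_mem_rightPart

lemma IsTriAnimal.settle_empty_settle (hB : IsTriAnimal Q {s} B) : settle ∅ (settle H B) = B := by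
  rw [settle_settle (hB.isLevelSeparated subset_rfl), hB.settle_empty]

lemma IsTriAnimal.source_mem_rightPart (hA : IsTriAnimal Q {q} A) : (q, 0) ∈ rightPart q A := by
  refine mem_rightPart.mpr ⟨hA.source_mem, fun h => ?_⟩
  cases h with
  | of_lt h => exact lt_irrefl q h
  | step _ _ hl _ => exact Nat.not_lt_zero _ hl

lemma IsTriAnimal.one_le_level_of_mem_leftPart (hA : IsTriAnimal Q {q} A)
    (hx : x ∈ leftPart q A) : 1 ≤ x.2 := by
  by_contra! h
  rw [hA.eq_source (leftPart_subset hx) (by omega)] at hx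
  exact notMem_leftPart_of_mem_rightPart hA.source_mem_rightPart hx

lemma IsTriAnimal.isTriAnimal_rightPart (hA : IsTriAnimal Q {q} A) :
    IsTriAnimal (Q ∩ Set.Ici q) {q} (rightPart q A) := by
  refine isTriAnimal_iff.mpr ⟨fun x hx => ⟨hA.1 x (rightPart_subset hx), le_of_mem_rightPart hx⟩,
    fun c => ⟨fun hc => (hA.2.1 c).mp (rightPart_subset hc), fun hc => ?_⟩, fun x hx h1 => ?_⟩
  · rw [mem_singleton.mp hc]
    exact hA.source_mem_rightPart
  · obtain ⟨y, hy, hn, hg⟩ := hA.exists_support (rightPart_subset hx) h1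
    exact ⟨y, mem_rightPart_of_lt hx hy hn (by have := one_le_gap hn; omega), hn, hg⟩

lemma IsTriAnimal.eq_sub_one_of_mem_leftPart (hA : IsTriAnimal Q {q} A) (hx : x ∈ leftPart q A)
    (hlow : ∀ y ∈ leftPart q A, (y.1 - x.1).natAbs ≤ 1 → ¬ y.2 < x.2) : x.1 = q - 1 := by
  have hlt : x.1 < q := by
    cases (mem_leftPart.mp hx).2 with
    | of_lt h => exact h
    | step hy hn hl habove => exact absurd hl (hlow _ (mem_leftPart.mpr ⟨hy, habove⟩) hn)
  obtain ⟨y, hy, hn, hg⟩ :=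
    hA.exists_support (leftPart_subset hx) (hA.one_le_level_of_mem_leftPart hx)
  have hy' : y ∈ rightPart q A := by
    rw [← rightPart_union_leftPart (q := q) (A := A)] at hy
    refine (mem_union.mp hy).resolve_right fun h => hlow y h hn ?_
    have := one_le_gap hn
    omega
  have := le_of_mem_rightPart hy'
  omega

lemma IsTriAnimal.settle_leftPart (hA : IsTriAnimal Q {q} A) (hne : (leftPart q A).Nonempty) :
    IsTriAnimal Q {q - 1} (settle ∅ (leftPart q A)) := by
  refine isTriAnimal_iff.mpr ⟨fun z hz => ?_, fun c => ?_, fun z hz h1 => ?_⟩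
  · obtain ⟨x, hx, rfl⟩ := mem_settle.mp hz
    exact hA.1 x (leftPart_subset hx)
  · rw [mem_singleton]
    constructor
    · intro hc
      obtain ⟨x, hx, hxc⟩ := mem_settle.mp hc
      obtain ⟨rfl, h0⟩ := Prod.mk.inj hxc
      refine hA.eq_sub_one_of_mem_leftPart hx fun y hy hn hl => ?_
      have := settleLevel_lt_settleLevel (F := ∅) hy hn hl
      omega
    · rintro rfl
      obtain ⟨x, hx, hmin⟩ := exists_min_image (leftPart q A) Prod.snd hne
      have hlow : ∀ y ∈ leftPart q A, (y.1 - x.1).natAbs ≤ 1 → ¬ y.2 < x.2 :=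
        fun y hy _ => not_lt.mpr (hmin y hy)
      have h0 : settleLevel ∅ (leftPart q A) x = 0 :=
        Nat.le_zero.mp (settleLevel_le (by simp) fun y hy hn hl => absurd hl (hlow y hy hn))
      rw [← hA.eq_sub_one_of_mem_leftPart hx hlow, ← h0]
      exact mk_mem_settle hx
  · obtain ⟨x, hx, rfl⟩ := mem_settle.mp hz
    rcases exists_eq_settleLevel h1 with ⟨y, hy, -⟩ | ⟨y, hy, hn, -, hg⟩
    · exact absurd hy (notMem_empty y)
    · exact ⟨_, mk_mem_settle hy, hn, hg⟩

lemma one_le_settleLevel_of_isTriAnimal (hH : IsTriAnimal (Q ∩ Set.Ici q) {q} H)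
    (hB : IsTriAnimal Q {q - 1} B) (hx : x ∈ B) : 1 ≤ settleLevel H B x := by
  rcases Nat.eq_zero_or_pos x.2 with h0 | h1
  · rw [hB.eq_source hx h0]
    exact Nat.one_le_of_lt (level_lt_settleLevel hH.source_mem (by simp))
  · obtain ⟨y, hy, hn, hg⟩ := hB.exists_support hx h1
    have := settleLevel_lt_settleLevel (F := H) hy hn (by have := one_le_gap hn; omega)
    omega

lemma isTriAnimal_union_settle (hH : IsTriAnimal (Q ∩ Set.Ici q) {q} H)
    (hB : IsTriAnimal Q {q - 1} B) : IsTriAnimal Q {q} (H ∪ settle H B) := by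
  refine isTriAnimal_iff.mpr ⟨fun z hz => ?_, fun c => ?_, fun z hz h1 => ?_⟩
  · rcases mem_union.mp hz with hz | hz
    · exact (hH.1 z hz).1
    · obtain ⟨x, hx, rfl⟩ := mem_settle.mp hz
      exact hB.1 x hx
  · refine ⟨fun hc => ?_, fun hc => mem_union_left _ ((hH.2.1 c).mpr hc)⟩
    rcases mem_union.mp hc with hc | hc
    · exact (hH.2.1 c).mp hc
    · obtain ⟨x, hx, hxc⟩ := mem_settle.mp hc
      have := one_le_settleLevel_of_isTriAnimal hH hB hx
      rw [(Prod.mk.inj hxc).2] at this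
      exact absurd this (by simp)
  · rcases mem_union.mp hz with hz | hz
    · obtain ⟨y, hy, hsupp⟩ := hH.exists_support hz h1
      exact ⟨y, mem_union_left _ hy, hsupp⟩
    obtain ⟨x, hx, rfl⟩ := mem_settle.mp hz
    rcases exists_eq_settleLevel h1 with ⟨y, hy, hn, hg⟩ | ⟨y, hy, hn, -, hg⟩
    · exact ⟨y, mem_union_left _ hy, hn, hg⟩
    · exact ⟨_, mem_union_right _ (mk_mem_settle hy), hn, hg⟩

lemma above_union_settle_iff (hH : IsTriAnimal (Q ∩ Set.Ici q) {q} H)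
    (hB : IsTriAnimal Q {q - 1} B) (hz : z ∈ H ∪ settle H B) :
    Above (H ∪ settle H B) q z ↔ z ∈ settle H B := by
  constructor
  · intro habove
    refine (mem_union.mp hz).resolve_left fun hzH => ?_
    clear hz
    induction habove with
    | of_lt hlt => exact absurd (hH.1 _ hzH).2 (not_le.mpr hlt)
    | step hy hn hl _ ih =>
      rcases mem_union.mp hy with hy | hy
      · exact ih hy
      · obtain ⟨x, hx, rfl⟩ := mem_settle.mp hy
        exact absurd hl (level_lt_settleLevel hzH (by omega)).not_gt
  · intro hzs
    obtain ⟨x, hx, rfl⟩ := mem_settle.mp hzs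
    clear hz hzs
    induction x using level_induction with
    | h x ih =>
      rcases Nat.eq_zero_or_pos x.2 with h0 | h1
      · rw [hB.eq_source hx h0]
        exact .of_lt (sub_one_lt q)
      obtain ⟨y, hy, hn, hg⟩ := hB.exists_support hx h1
      have hl : y.2 < x.2 := by have := one_le_gap hn; omega
      exact .step (mem_union_right _ (mk_mem_settle hy)) hn (settleLevel_lt_settleLevel hy hn hl)
        (ih y hl hy)

lemma rightPart_union_settle (hH : IsTriAnimal (Q ∩ Set.Ici q) {q} H)
    (hB : IsTriAnimal Q {q - 1} B) : rightPart q (H ∪ settle H B) = H := by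
  ext z
  rw [mem_rightPart]
  refine ⟨fun ⟨hz, hna⟩ => ?_, fun hz => ⟨mem_union_left _ hz, fun ha => ?_⟩⟩
  · exact (mem_union.mp hz).resolve_right fun h => hna ((above_union_settle_iff hH hB hz).mpr h)
  · exact disjoint_left.mp (disjoint_settle H B) hz
      ((above_union_settle_iff hH hB (mem_union_left _ hz)).mp ha)

lemma leftPart_union_settle (hH : IsTriAnimal (Q ∩ Set.Ici q) {q} H)
    (hB : IsTriAnimal Q {q - 1} B) : leftPart q (H ∪ settle H B) = settle H B := by
  ext z
  rw [mem_leftPart]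
  refine ⟨fun ⟨hz, ha⟩ => (above_union_settle_iff hH hB hz).mp ha, fun hz => ?_⟩
  exact ⟨mem_union_right _ hz, (above_union_settle_iff hH hB (mem_union_right _ hz)).mpr hz⟩

end Decomposition

namespace TriAnimal

noncomputable def animals (Q : Set ℤ) (s : ℤ) (n : ℕ) : Finset (Finset (ℤ × ℕ)) :=
  (finite_setOf_isTriAnimal Q s n).toFinset

variable {Q : Set ℤ} {q s : ℤ} {n : ℕ} {A : Finset (ℤ × ℕ)}

lemma mem_animals : A ∈ animals Q s n ↔ IsTriAnimal Q {s} A ∧ #A = n :=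
  Set.Finite.mem_toFinset _

lemma triCount_eq_card_animals : triCount Q {s} n = #(animals Q s n) :=
  Set.ncard_eq_toFinset_card _ _

lemma filter_animals_leftPart_eq_empty :
    (animals Q q n).filter (fun A => leftPart q A = ∅) = animals (Q ∩ Set.Ici q) q n := by
  ext A
  simp only [mem_filter, mem_animals, leftPart_eq_empty_iff]
  refine ⟨fun ⟨⟨hA, hn⟩, hcol⟩ => ⟨⟨fun x hx => ⟨hA.1 x hx, hcol x hx⟩, hA.2⟩, hn⟩,
    fun ⟨hA, hn⟩ => ⟨⟨hA.mono Set.inter_subset_left, hn⟩, fun x hx => (hA.1 x hx).2⟩⟩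

lemma card_animals_filter_rightPart {k : ℕ} (hk : k ≤ n) :
    #(((animals Q q n).filter fun A => ¬ leftPart q A = ∅).filter
        fun A => #(rightPart q A) = k) =
      #(animals (Q ∩ Set.Ici q) q k) * #(animals Q (q - 1) (n - k)) := by
  rw [← card_product]
  refine card_nbij' (fun A => (rightPart q A, settle ∅ (leftPart q A)))
    (fun p => p.1 ∪ settle p.1 p.2) (fun A hA => ?_) (fun p hp => ?_) (fun A hA => ?_)
    (fun p hp => ?_)
  · simp only [mem_coe, mem_filter, mem_animals] at hA
    obtain ⟨⟨⟨hA, rfl⟩, hne⟩, rfl⟩ := hA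
    simp only [coe_product, Set.mem_prod, mem_coe, mem_animals, card_settle, and_true]
    refine ⟨hA.isTriAnimal_rightPart, hA.settle_leftPart (nonempty_iff_ne_empty.mpr hne), ?_⟩
    rw [← card_rightPart_add_card_leftPart (q := q) (A := A)]
    omega
  · simp only [coe_product, Set.mem_prod, mem_coe, mem_animals] at hp
    obtain ⟨⟨hH, rfl⟩, hB, hcard⟩ := hp
    simp only [mem_coe, mem_filter, mem_animals]
    rw [rightPart_union_settle hH hB, leftPart_union_settle hH hB,
      card_union_of_disjoint (disjoint_settle _ _), card_settle]
    exact ⟨⟨⟨isTriAnimal_union_settle hH hB, by omega⟩,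
      nonempty_iff_ne_empty.mp ⟨_, mk_mem_settle hB.source_mem⟩⟩, rfl⟩
  · simp only [mem_coe, mem_filter, mem_animals] at hA
    dsimp only
    rw [hA.1.1.1.settle_rightPart_settle_leftPart, rightPart_union_leftPart]
  · simp only [coe_product, Set.mem_prod, mem_coe, mem_animals] at hp
    dsimp only
    rw [rightPart_union_settle hp.1.1 hp.2.1, leftPart_union_settle hp.1.1 hp.2.1,
      hp.2.1.settle_empty_settle]

lemma card_animals :
    #(animals Q q n) = #(animals (Q ∩ Set.Ici q) q n) +
      ∑ k ∈ range (n + 1), #(animals (Q ∩ Set.Ici q) q k) * #(animals Q (q - 1) (n - k)) := by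
  rw [← card_filter_add_card_filter_not (p := fun A => leftPart q A = ∅),
    filter_animals_leftPart_eq_empty]
  congr 1
  rw [card_eq_sum_card_fiberwise (f := fun A => #(rightPart q A)) (t := range (n + 1))]
  · exact sum_congr rfl fun k hk =>
      card_animals_filter_rightPart (Nat.lt_succ_iff.mp (mem_range.mp hk))
  · intro A hA
    obtain ⟨hA, -⟩ := mem_filter.mp hA
    rw [mem_coe, mem_range, Nat.lt_succ_iff, ← (mem_animals.mp hA).2]
    exact card_le_card rightPart_subset

end TriAnimal

theorem triGF_eq_mul (Q : Set ℤ) (q : ℤ) :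
    triGF Q {q} = triGF (Q ∩ Set.Ici q) {q} * (1 + triGF Q {q - 1}) := by
  ext n
  simp only [triGF, mul_add, mul_one, map_add, PowerSeries.coeff_mk, PowerSeries.coeff_mul,
    Finset.Nat.sum_antidiagonal_eq_sum_range_succ_mk, triCount_eq_card_animals]
  exact_mod_cast card_animals

namespace TriAnimal

def shift (t : ℤ) (A : Finset (ℤ × ℕ)) : Finset (ℤ × ℕ) :=
  A.image fun x => (x.1 + t, x.2)

lemma mem_shift {t : ℤ} {A : Finset (ℤ × ℕ)} {z : ℤ × ℕ} :
    z ∈ shift t A ↔ (z.1 - t, z.2) ∈ A := by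
  refine mem_image.trans ⟨?_, fun h => ⟨_, h, Prod.ext (sub_add_cancel z.1 t) rfl⟩⟩
  rintro ⟨x, hx, rfl⟩
  simpa using hx

lemma shift_shift (t u : ℤ) (A : Finset (ℤ × ℕ)) : shift t (shift u A) = shift (u + t) A := by
  ext z
  simp only [mem_shift, sub_sub, add_comm t u]

lemma card_shift (t : ℤ) (A : Finset (ℤ × ℕ)) : #(shift t A) = #A :=
  card_image_of_injective A fun x y h => by simpa [Prod.ext_iff] using h

lemma shift_zero (A : Finset (ℤ × ℕ)) : shift 0 A = A := by
  ext z
  simp [mem_shift]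

end TriAnimal

lemma IsTriAnimal.shift {Q Q' : Set ℤ} {s : ℤ} {A : Finset (ℤ × ℕ)} (hA : IsTriAnimal Q {s} A)
    {t : ℤ} (hQ : ∀ c ∈ Q, c + t ∈ Q') : IsTriAnimal Q' {s + t} (shift t A) := by
  refine isTriAnimal_iff.mpr ⟨fun z hz => ?_, fun c => ?_, fun z hz h1 => ?_⟩
  · simpa using hQ _ (hA.1 _ (mem_shift.mp hz))
  · rw [mem_shift, hA.2.1, mem_singleton, mem_singleton, sub_eq_iff_eq_add]
  · obtain ⟨y, hy, hn, hg⟩ := hA.exists_support (mem_shift.mp hz) h1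
    refine ⟨(y.1 + t, y.2), mem_shift.mpr (by simpa using hy), ?_, ?_⟩ <;>
      simp only [gap] at hn hg ⊢ <;> omega

theorem triGF_shift {Q Q' : Set ℤ} {t : ℤ} (hQ : ∀ c, c + t ∈ Q' ↔ c ∈ Q) (s : ℤ) :
    triGF Q' {s + t} = triGF Q {s} := by
  ext n
  simp only [triGF, PowerSeries.coeff_mk, triCount]
  refine congrArg _ (Set.ncard_congr (fun A _ => shift (-t) A) (fun A ⟨hA, hn⟩ => ⟨?_, ?_⟩)
    (fun A B _ _ h => ?_) fun A ⟨hA, hn⟩ => ⟨shift t A, ⟨?_, ?_⟩, ?_⟩)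
  · simpa using hA.shift (t := -t) fun c hc => (hQ _).mp (by simpa using hc)
  · rwa [card_shift]
  · simpa [shift_shift, shift_zero] using congrArg (shift t) h
  · exact hA.shift fun c hc => (hQ c).mpr hc
  · rwa [card_shift]
  · simp [shift_shift, shift_zero]

theorem triGF_Ici_zero_succ (q : ℕ) :
    triGF (Set.Ici 0) {((q + 1 : ℕ) : ℤ)} =
      triGF (Set.Ici 0) {0} * (1 + triGF (Set.Ici 0) {(q : ℤ)}) := by
  have hsource :
      triGF (Set.Ici ((q + 1 : ℕ) : ℤ)) {((q + 1 : ℕ) : ℤ)} = triGF (Set.Ici 0) {0} := by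
    simpa using triGF_shift (Q := Set.Ici 0) (t := ((q + 1 : ℕ) : ℤ)) (fun c => by simp) 0
  rw [triGF_eq_mul, Set.Ici_inter_Ici, sup_of_le_right (Int.natCast_nonneg _), hsource]
  push_cast
  rw [add_sub_cancel_right]

theorem stmt13 (q : ℕ) :
    (1 - triGF (Set.Ici 0) {0}) * triGF (Set.Ici 0) {(q : ℤ)}
      = (1 - triGF (Set.Ici 0) {0} ^ (q + 1)) * triGF (Set.Ici 0) {0} := by
  induction q with
  | zero => simp
  | succ q ih =>
    rw [triGF_Ici_zero_succ]
    linear_combination triGF (Set.Ici 0) {0} * ih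
end
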